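/- arXiv:math/0609097 — 2 statements merged into one kernel-verified Lean document; each statement's English description precedes it below -/
import Mathlib

section
/- The function \omega \mapsto \min_{|\beta| \le d+1} |\omega^{-\beta}| (minimum over multi-indices \beta with |\beta| \le d+1, where \omega^\beta = \prod_j \omega_j^{\beta_j}) is integrable on the region \{\omega \in \mathbb{R}^d : |\omega| \ge 1\}. -/
open MeasureTheory Complex Real
open scoped FourierTransform RealInnerProductSpace ENNReal NNReal

noncomputable section

/-- Euclidean space `ℝ^d`. -/
abbrev Ed (d : ℕ) := EuclideanSpace ℝ (Fin d)

/-- Short-time Fourier transform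
`V_g f (x, ω) = ∫ f t * conj (g (t - x)) * e^{-2πi ω·t} dt`. -/
def STFT {d : ℕ} (g f : Ed d → ℂ) (x ω : Ed d) : ℂ :=
  ∫ t, f t * (starRingEnd ℂ) (g (t - x)) *
    Complex.exp (-2 * (π : ℂ) * Complex.I * ((inner ℝ ω t : ℝ) : ℂ))

/-- Mixed-norm modulation space (quasi-)norm `‖V_g f‖_{L^{p,q}}`. -/
def modNorm {d : ℕ} (p q : ℝ≥0∞) (g f : Ed d → ℂ) : ℝ≥0∞ :=
  eLpNorm (fun ω => (eLpNorm (fun x => STFT g f x ω) p volume).toReal) q volume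

/-- Fourier multiplier operator `H_σ f = 𝓕⁻¹ (σ ⬝ 𝓕 f)`. -/
def fourierMul {d : ℕ} (σ : Ed d → ℂ) (f : Ed d → ℂ) : Ed d → ℂ :=
  fun x => 𝓕⁻ (fun ξ => σ ξ * 𝓕 f ξ) x

/-- The function `ω ↦ min_{|β| ≤ d+1} |ω^β|⁻¹` (minimum over multi-indices)
is integrable on `{|ω| ≥ 1}`. -/
theorem min_inv_monomial_integrable (d : ℕ) (hd : 1 ≤ d) :
    IntegrableOn
      (fun ω : Ed d => ⨅ β : {β : Fin d → ℕ // ∑ i, β i ≤ d + 1},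
        |∏ i, (ω i) ^ ((β : Fin d → ℕ) i)|⁻¹)
      {ω : Ed d | 1 ≤ ‖ω‖} volume := by
  haveI : Nonempty {β : Fin d → ℕ // ∑ i, β i ≤ d + 1} := ⟨⟨0, by simp⟩⟩
  haveI : Nonempty (Fin d) := Fin.pos_iff_nonempty.mp hd
  set f : Ed d → ℝ := fun ω => ⨅ β : {β : Fin d → ℕ // ∑ i, β i ≤ d + 1},
        |∏ i, (ω i) ^ ((β : Fin d → ℕ) i)|⁻¹ with hf
  have hmeas : Measurable f := by
    apply Measurable.iInf
    intro β
    have hc : Continuous fun ω : Ed d => |∏ i, (ω i) ^ ((β : Fin d → ℕ) i)| := by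
      apply Continuous.abs
      exact continuous_finset_prod _ fun i _ =>
        ((EuclideanSpace.proj i : Ed d →L[ℝ] ℝ).continuous.pow _)
    exact hc.measurable.inv
  have hrpow : Integrable (fun ω : Ed d => (1 + ‖ω‖) ^ (-((d : ℝ) + 1))) volume := by
    apply integrable_one_add_norm
    rw [finrank_euclideanSpace, Fintype.card_fin]
    linarith
  have hint : Integrable
      (fun ω : Ed d => (2 * Real.sqrt d) ^ (d + 1) * ((1 + ‖ω‖) ^ (d + 1))⁻¹) volume := by
    have heq : (fun ω : Ed d => (1 + ‖ω‖) ^ (-((d : ℝ) + 1)))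
        = fun ω : Ed d => ((1 + ‖ω‖) ^ (d + 1))⁻¹ := by
      funext ω
      have h0 : (0:ℝ) ≤ 1 + ‖ω‖ := by positivity
      rw [show -((d : ℝ) + 1) = -((d + 1 : ℕ) : ℝ) by push_cast; ring,
        Real.rpow_neg h0, Real.rpow_natCast]
    rw [heq] at hrpow
    exact hrpow.const_mul _
  have hS : MeasurableSet {ω : Ed d | 1 ≤ ‖ω‖} :=
    (isClosed_le continuous_const continuous_norm).measurableSet
  apply Integrable.mono' hint.integrableOn hmeas.aestronglyMeasurable.restrict
  rw [ae_restrict_iff' hS]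
  filter_upwards with ω hω
  -- f is nonnegative
  have hbdd : BddBelow (Set.range fun β : {β : Fin d → ℕ // ∑ i, β i ≤ d + 1} =>
      |∏ i, (ω i) ^ ((β : Fin d → ℕ) i)|⁻¹) := by
    refine ⟨0, ?_⟩
    rintro x ⟨β, rfl⟩
    positivity
  have hnonneg : 0 ≤ f ω := le_ciInf fun β => by positivity
  rw [Real.norm_eq_abs, _root_.abs_of_nonneg hnonneg]
  -- pick the coordinate with largest absolute value
  obtain ⟨j, -, hj⟩ := Finset.exists_max_image Finset.univ (fun i => |ω i|)
    ⟨Classical.arbitrary (Fin d), Finset.mem_univ _⟩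
  have hj' : ∀ i, |ω i| ≤ |ω j| := fun i => hj i (Finset.mem_univ i)
  have hd0 : (0:ℝ) ≤ d := Nat.cast_nonneg d
  -- norm bound: ‖ω‖ ≤ √d * |ω j|
  have hnorm : ‖ω‖ ≤ Real.sqrt d * |ω j| := by
    rw [EuclideanSpace.norm_eq]
    have : ∑ i, ‖ω i‖ ^ 2 ≤ (d : ℝ) * |ω j| ^ 2 := by
      calc ∑ i, ‖ω i‖ ^ 2 ≤ ∑ _i : Fin d, |ω j| ^ 2 := by
            apply Finset.sum_le_sum
            intro i _
            rw [Real.norm_eq_abs]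
            exact pow_le_pow_left₀ (abs_nonneg _) (hj' i) 2
        _ = (d : ℝ) * |ω j| ^ 2 := by
            rw [Finset.sum_const, Finset.card_univ, Fintype.card_fin, nsmul_eq_mul]
    calc Real.sqrt (∑ i, ‖ω i‖ ^ 2) ≤ Real.sqrt ((d : ℝ) * |ω j| ^ 2) :=
          Real.sqrt_le_sqrt this
      _ = Real.sqrt d * |ω j| := by
          rw [Real.sqrt_mul hd0, Real.sqrt_sq_eq_abs, _root_.abs_abs]
  have hjpos : 0 < |ω j| := by
    by_contra h
    push_neg at h
    have h0 : |ω j| = 0 := le_antisymm h (abs_nonneg _)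
    rw [h0, mul_zero] at hnorm
    linarith
  have hsd : (1:ℝ) ≤ Real.sqrt d := by
    rw [show (1:ℝ) = Real.sqrt 1 by simp]
    exact Real.sqrt_le_sqrt (by exact_mod_cast hd)
  -- f ω ≤ value at β = Pi.single j (d+1)
  have hβ : ∑ i, (Pi.single j (d + 1) : Fin d → ℕ) i ≤ d + 1 := by
    rw [Finset.sum_pi_single']
    simp
  have hle1 : f ω ≤ (|ω j| ^ (d + 1))⁻¹ := by
    have := ciInf_le hbdd ⟨Pi.single j (d + 1), hβ⟩
    have hprod : ∏ i, (ω i) ^ ((Pi.single j (d + 1) : Fin d → ℕ) i) = ω j ^ (d + 1) := by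
      rw [Finset.prod_eq_single j]
      · simp
      · intro i _ hij
        rw [Pi.single_eq_of_ne hij, pow_zero]
      · intro h; exact absurd (Finset.mem_univ j) h
    rw [hf]
    calc (⨅ β : {β : Fin d → ℕ // ∑ i, β i ≤ d + 1},
          |∏ i, (ω i) ^ ((β : Fin d → ℕ) i)|⁻¹)
        ≤ |∏ i, (ω i) ^ ((Pi.single j (d + 1) : Fin d → ℕ) i)|⁻¹ := this
      _ = (|ω j| ^ (d + 1))⁻¹ := by rw [hprod, _root_.abs_pow]
  -- (|ω j|^(d+1))⁻¹ ≤ (2√d)^(d+1) * ((1+‖ω‖)^(d+1))⁻¹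
  have key : (1 + ‖ω‖) ^ (d + 1) ≤ (2 * Real.sqrt d * |ω j|) ^ (d + 1) := by
    apply pow_le_pow_left₀ (by positivity)
    nlinarith [hω, hnorm]
  have hle2 : (|ω j| ^ (d + 1))⁻¹
      ≤ (2 * Real.sqrt d) ^ (d + 1) * ((1 + ‖ω‖) ^ (d + 1))⁻¹ := by
    have h1 : (0:ℝ) < (1 + ‖ω‖) ^ (d + 1) := by positivity
    have h2 : (0:ℝ) < (2 * Real.sqrt d) ^ (d + 1) := by positivity
    have hinv : ((2 * Real.sqrt d * |ω j|) ^ (d + 1))⁻¹ ≤ ((1 + ‖ω‖) ^ (d + 1))⁻¹ :=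
      inv_anti₀ h1 key
    calc (|ω j| ^ (d + 1))⁻¹
        = (2 * Real.sqrt d) ^ (d + 1) * ((2 * Real.sqrt d * |ω j|) ^ (d + 1))⁻¹ := by
          rw [show (2*Real.sqrt d*|ω j|)^(d+1) = (2*Real.sqrt d)^(d+1) * |ω j|^(d+1) from mul_pow _ _ _,
            mul_inv, ← mul_assoc, mul_inv_cancel₀ (ne_of_gt h2), one_mul]
      _ ≤ (2 * Real.sqrt d) ^ (d + 1) * ((1 + ‖ω‖) ^ (d + 1))⁻¹ :=
          mul_le_mul_of_nonneg_left hinv (le_of_lt h2)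
  exact hle1.trans hle2
end
end

section
/- Let \sigma_2(\xi) = e^{i\pi t|\xi|^2} on \mathbb{R}^d with t \ne 0 and Gaussian window g(\xi) = e^{-\pi|\xi|^2}. Then \sup_x \int |V_g\sigma_2(x,\omega)|\,d\omega = (1+t^2)^{d/4} and \sup_\omega \int |V_g\sigma_2(x,\omega)|\,dx = (1+t^2)^{d/4} t^{-d}, while \int \sup_x |V_g\sigma_2(x,\omega)|\,d\omega = \infty. In particular \sigma_2 \in W(\mathcal{F}L^1,\ell^\infty) \cap M^{1,\infty} but \sigma_2 \notin M^{\infty,1}. -/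
open MeasureTheory Complex Real
open scoped FourierTransform RealInnerProductSpace ENNReal NNReal

noncomputable section

lemma nsq {d : ℕ} (y : Ed d) : ‖y‖^2 = ∑ i, y i ^ 2 := by
  rw [EuclideanSpace.norm_eq, Real.sq_sqrt (by positivity)]
  simp [sq_abs]

lemma stft_eq {d : ℕ} (t : ℝ) (x ω : Ed d) :
    STFT (fun ξ => ((Real.exp (-π * ‖ξ‖ ^ 2) : ℝ) : ℂ))
        (fun ξ => Complex.exp (Complex.I * ((π * t * ‖ξ‖ ^ 2 : ℝ) : ℂ))) x ω =
      ((π : ℂ) / (π * (1 - Complex.I * t))) ^ ((d : ℂ) / 2 : ℂ) *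
        cexp ((∑ i, (2 * π * (x i) - 2 * π * Complex.I * (ω i) : ℂ) ^ 2) /
          (4 * ((π : ℂ) * (1 - Complex.I * t))) + ((-π * ‖x‖ ^ 2 : ℝ) : ℂ)) := by
  have hb : (0:ℝ) < ((π : ℂ) * (1 - Complex.I * t)).re := by
    simp [Complex.mul_re, Real.pi_pos]
  unfold STFT
  rw [← (MeasurePreserving.symm _
      (EuclideanSpace.volume_preserving_symm_measurableEquiv_toLp (Fin d))).integral_comp
    (MeasurableEquiv.measurableEmbedding _)]
  have key : ∀ v : Fin d → ℝ,
      (fun ξ : Ed d => Complex.exp (Complex.I * ((π * t * ‖ξ‖ ^ 2 : ℝ) : ℂ)) *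
        (starRingEnd ℂ) (((Real.exp (-π * ‖ξ - x‖ ^ 2) : ℝ) : ℂ)) *
        Complex.exp (-2 * (π : ℂ) * Complex.I * ((inner ℝ ω ξ : ℝ) : ℂ)))
        ((MeasurableEquiv.toLp 2 (Fin d → ℝ)).symm.symm v) =
      cexp (-((π : ℂ) * (1 - Complex.I * t)) * ∑ i, (v i : ℂ) ^ 2 +
        ∑ i, (2 * π * (x i) - 2 * π * Complex.I * (ω i) : ℂ) * v i) *
        cexp (((-π * ‖x‖ ^ 2 : ℝ) : ℂ)) := by
    intro v
    have hv : ∀ i, ((MeasurableEquiv.toLp 2 (Fin d → ℝ)).symm.symm v) i = v i := fun _ => rfl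
    simp only [Complex.conj_ofReal]
    simp only [Complex.ofReal_exp, ← Complex.exp_add]
    congr 1
    simp only [nsq]
    simp only [hv, PiLp.sub_apply, PiLp.inner_apply, RCLike.inner_apply, conj_trivial]
    push_cast
    simp only [Finset.mul_sum, ← Finset.sum_add_distrib, ← Finset.sum_sub_distrib,
      ← Finset.sum_neg_distrib]
    refine Finset.sum_congr rfl fun i _ => ?_
    ring
  simp only [Function.comp_def]
  simp only [key]
  rw [MeasureTheory.integral_mul_const, GaussianFourier.integral_cexp_neg_mul_sum_add hb]
  rw [Complex.exp_add]
  simp [Fintype.card_fin]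
  ring

lemma re_aux (t A B C : ℝ) :
    ((((4*π^2*(A - B) : ℝ) : ℂ) - 8*π^2*Complex.I*C) / (4*((π:ℂ)*(1-Complex.I*t)))
      + ((-π*A : ℝ):ℂ)).re = -(π/(1+t^2)) * (B - 2*t*C + t^2*A) := by
  have h1 : (1:ℝ) + t^2 ≠ 0 := by positivity
  rw [Complex.add_re, Complex.div_re]
  simp [Complex.normSq_apply, ← Complex.ofReal_pow]
  have h4 : 4 * π * (4 * π) + 4 * (π * t) * (4 * (π * t)) = 16 * π^2 * (1 + t^2) := by ring
  rw [h4]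
  have h5 : 16 * π^2 * (1 + t^2) ≠ 0 := by positivity
  field_simp
  ring

lemma abs_aux (d : ℕ) (t : ℝ) :
    ‖((π : ℂ) / (π * (1 - Complex.I * t))) ^ ((d : ℂ) / 2 : ℂ)‖
      = (1+t^2) ^ (-(d:ℝ)/4) := by
  have h2 : ((d : ℂ)/2 : ℂ) = (((d:ℝ)/2 : ℝ) : ℂ) := by push_cast; ring
  rw [h2, Complex.norm_cpow_real]
  have h3 : ‖(π : ℂ) / (π * (1 - Complex.I * t))‖ = (1+t^2) ^ (-(1:ℝ)/2) := by
    rw [norm_div, norm_mul]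
    have : ‖1 - Complex.I * t‖ = Real.sqrt (1+t^2) := by
      rw [Complex.norm_def, Complex.normSq_apply]
      simp
      ring_nf
    rw [this, Complex.norm_real, Real.norm_eq_abs, abs_of_pos pi_pos]
    rw [Real.sqrt_eq_rpow]
    rw [div_mul_eq_div_div, div_self pi_ne_zero, one_div, ← Real.rpow_neg_one,
      ← Real.rpow_mul (by positivity)]
    norm_num
  rw [h3, ← Real.rpow_mul (by positivity)]
  ring_nf

lemma sum_sq_eq {d : ℕ} (x ω : Ed d) :
    ∑ i, (2 * π * (x i) - 2 * π * Complex.I * (ω i) : ℂ) ^ 2 =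
      ((4*π^2*(‖x‖^2 - ‖ω‖^2) : ℝ) : ℂ)
        - 8*π^2*Complex.I*(((inner ℝ x ω : ℝ) : ℝ) : ℂ) := by
  simp only [nsq]
  simp only [PiLp.inner_apply, RCLike.inner_apply, conj_trivial]
  push_cast
  simp only [Finset.mul_sum, mul_sub, ← Finset.sum_sub_distrib]
  refine Finset.sum_congr rfl fun i _ => ?_
  ring_nf
  rw [Complex.I_sq]
  ring

lemma stft_norm {d : ℕ} (t : ℝ) (x ω : Ed d) :
    ‖STFT (fun ξ => ((Real.exp (-π * ‖ξ‖ ^ 2) : ℝ) : ℂ))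
        (fun ξ => Complex.exp (Complex.I * ((π * t * ‖ξ‖ ^ 2 : ℝ) : ℂ))) x ω‖ =
      (1+t^2) ^ (-(d:ℝ)/4) * rexp (-(π/(1+t^2)) * ‖ω - t • x‖^2) := by
  rw [stft_eq, norm_mul, Complex.norm_exp,
    abs_aux, sum_sq_eq]
  congr 2
  have hre := re_aux t (‖x‖^2) (‖ω‖^2) (inner ℝ x ω : ℝ)
  rw [hre]
  have hnorm : ‖ω - t • x‖^2 = ‖ω‖^2 - 2*t*(inner ℝ x ω : ℝ) + t^2*‖x‖^2 := by
    rw [norm_sub_sq_real, real_inner_smul_right, norm_smul]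
    rw [real_inner_comm]
    simp [mul_pow, sq_abs]
    ring
  rw [hnorm]

/-- For the chirp `σ₂(ξ) = e^{iπt|ξ|²}`, `t ≠ 0`, and Gaussian window
`g(ξ) = e^{-π|ξ|²}`: `sup_x ∫ |V_gσ₂| dω = (1+t²)^{d/4}`,
`sup_ω ∫ |V_gσ₂| dx = (1+t²)^{d/4} |t|^{-d}`, while `∫ sup_x |V_gσ₂| dω = ∞`.
Hence `σ₂ ∈ W(𝓕L¹,ℓ^∞) ∩ M^{1,∞}` but `σ₂ ∉ M^{∞,1}`. -/
theorem chirp_wiener_norms {d : ℕ} (hd : 1 ≤ d) (t : ℝ) (ht : t ≠ 0) :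
    (⨆ x : Ed d, ∫⁻ ω,
        (‖STFT (fun ξ => ((Real.exp (-π * ‖ξ‖ ^ 2) : ℝ) : ℂ))
            (fun ξ => Complex.exp (Complex.I * ((π * t * ‖ξ‖ ^ 2 : ℝ) : ℂ))) x ω‖₊ : ℝ≥0∞)) =
      ENNReal.ofReal ((1 + t ^ 2) ^ ((d : ℝ) / 4)) ∧
    (⨆ ω : Ed d, ∫⁻ x,
        (‖STFT (fun ξ => ((Real.exp (-π * ‖ξ‖ ^ 2) : ℝ) : ℂ))
            (fun ξ => Complex.exp (Complex.I * ((π * t * ‖ξ‖ ^ 2 : ℝ) : ℂ))) x ω‖₊ : ℝ≥0∞)) =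
      ENNReal.ofReal ((1 + t ^ 2) ^ ((d : ℝ) / 4) * |t| ^ (-(d : ℝ))) ∧
    (∫⁻ ω, ⨆ x : Ed d,
        (‖STFT (fun ξ => ((Real.exp (-π * ‖ξ‖ ^ 2) : ℝ) : ℂ))
            (fun ξ => Complex.exp (Complex.I * ((π * t * ‖ξ‖ ^ 2 : ℝ) : ℂ))) x ω‖₊ : ℝ≥0∞)) =
      ⊤ := by
  have h1t : (0:ℝ) < 1 + t^2 := by positivity
  set K : ℝ := (1+t^2) ^ (-(d:ℝ)/4) with hK
  have hKpos : 0 < K := Real.rpow_pos_of_pos h1t _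
  set a : ℝ := π/(1+t^2) with ha
  have hapos : 0 < a := by positivity
  -- base integrability and integral
  have base : Integrable (fun v : Ed d => rexp (-(a * ‖v‖^2))) := by
    have h := (GaussianFourier.integrable_cexp_neg_mul_sq_norm_add (V := Ed d)
      (b := (a:ℂ)) (by simpa using hapos) 0 0).norm
    have heq : ∀ v : Ed d, ‖cexp (-(a:ℂ) * ‖v‖^2 + 0 * (inner ℝ (0 : Ed d) v : ℝ))‖
        = rexp (-(a * ‖v‖^2)) := by
      intro v
      rw [Complex.norm_exp]
      congr 1
      simp [← Complex.ofReal_pow]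
    simpa only [heq] using h
  have baseInt : ∫ v : Ed d, rexp (-(a * ‖v‖^2)) = (1+t^2) ^ ((d:ℝ)/2) := by
    have h := GaussianFourier.integral_rexp_neg_mul_sq_norm (V := Ed d) hapos
    simp only [neg_mul] at h ⊢
    rw [h, finrank_euclideanSpace_fin]
    congr 1
    rw [ha]
    field_simp
  have hKint : K * (1+t^2) ^ ((d:ℝ)/2) = (1 + t ^ 2) ^ ((d : ℝ) / 4) := by
    rw [hK, ← Real.rpow_add h1t]
    congr 1
    ring
  -- Part 1
  have part1 : ∀ x : Ed d, (∫⁻ ω,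
      (‖STFT (fun ξ => ((Real.exp (-π * ‖ξ‖ ^ 2) : ℝ) : ℂ))
          (fun ξ => Complex.exp (Complex.I * ((π * t * ‖ξ‖ ^ 2 : ℝ) : ℂ))) x ω‖₊ : ℝ≥0∞)) =
      ENNReal.ofReal (K * (1+t^2) ^ ((d:ℝ)/2)) := by
    intro x
    have hrw : ∀ ω : Ed d, (‖STFT (fun ξ => ((Real.exp (-π * ‖ξ‖ ^ 2) : ℝ) : ℂ))
        (fun ξ => Complex.exp (Complex.I * ((π * t * ‖ξ‖ ^ 2 : ℝ) : ℂ))) x ω‖₊ : ℝ≥0∞) =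
        ENNReal.ofReal (K * rexp (-(a * ‖ω - t • x‖^2))) := by
      intro ω
      rw [← enorm_eq_nnnorm, ← ofReal_norm, stft_norm, ← hK, neg_mul, ← ha]
    simp only [hrw]
    rw [← MeasureTheory.ofReal_integral_eq_lintegral_ofReal
      (((base.comp_sub_right (t • x))).const_mul K)
      (Filter.Eventually.of_forall fun ω => by positivity)]
    congr 1
    rw [MeasureTheory.integral_const_mul,
      MeasureTheory.integral_sub_right_eq_self (fun v : Ed d => rexp (-(a * ‖v‖^2))) (t • x),
      baseInt]
  -- Part 2
  have part2 : ∀ ω : Ed d, (∫⁻ x,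
      (‖STFT (fun ξ => ((Real.exp (-π * ‖ξ‖ ^ 2) : ℝ) : ℂ))
          (fun ξ => Complex.exp (Complex.I * ((π * t * ‖ξ‖ ^ 2 : ℝ) : ℂ))) x ω‖₊ : ℝ≥0∞)) =
      ENNReal.ofReal (K * (|(t ^ d)⁻¹| * (1+t^2) ^ ((d:ℝ)/2))) := by
    intro ω
    have hrw : ∀ x : Ed d, (‖STFT (fun ξ => ((Real.exp (-π * ‖ξ‖ ^ 2) : ℝ) : ℂ))
        (fun ξ => Complex.exp (Complex.I * ((π * t * ‖ξ‖ ^ 2 : ℝ) : ℂ))) x ω‖₊ : ℝ≥0∞) =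
        ENNReal.ofReal (K * rexp (-(a * ‖t • x - ω‖^2))) := by
      intro x
      rw [← enorm_eq_nnnorm, ← ofReal_norm, stft_norm, ← hK, neg_mul, ← ha, norm_sub_rev]
    simp only [hrw]
    have hint2 : Integrable (fun x : Ed d => K * rexp (-(a * ‖t • x - ω‖^2))) := by
      refine Integrable.const_mul ?_ K
      exact (MeasureTheory.integrable_comp_smul_iff volume
        (fun y : Ed d => rexp (-(a * ‖y - ω‖^2))) ht).2 (base.comp_sub_right ω)
    rw [← MeasureTheory.ofReal_integral_eq_lintegral_ofReal hint2
      (Filter.Eventually.of_forall fun x => by positivity)]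
    congr 1
    rw [MeasureTheory.integral_const_mul]
    congr 1
    rw [MeasureTheory.Measure.integral_comp_smul volume (fun y : Ed d => rexp (-(a * ‖y - ω‖^2))) t,
      finrank_euclideanSpace_fin, smul_eq_mul]
    congr 1
    rw [MeasureTheory.integral_sub_right_eq_self (fun v : Ed d => rexp (-(a * ‖v‖^2))) ω,
      baseInt]
  refine ⟨?_, ?_, ?_⟩
  · simp only [part1]
    rw [iSup_const, hKint]
  · simp only [part2]
    rw [iSup_const]
    congr 1
    rw [← mul_assoc, mul_comm K, mul_assoc, hKint, mul_comm]
    congr 1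
    rw [abs_inv, _root_.abs_pow, ← Real.rpow_natCast |t| d, ← Real.rpow_neg (abs_nonneg t)]
  · have hsup : ∀ ω : Ed d, ENNReal.ofReal K ≤ ⨆ x : Ed d,
        (‖STFT (fun ξ => ((Real.exp (-π * ‖ξ‖ ^ 2) : ℝ) : ℂ))
            (fun ξ => Complex.exp (Complex.I * ((π * t * ‖ξ‖ ^ 2 : ℝ) : ℂ))) x ω‖₊ : ℝ≥0∞) := by
      intro ω
      refine le_iSup_of_le (t⁻¹ • ω) ?_
      rw [← enorm_eq_nnnorm, ← ofReal_norm, stft_norm, ← hK]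
      have h0 : ω - t • (t⁻¹ • ω) = 0 := by
        rw [smul_smul, mul_inv_cancel₀ ht, one_smul, sub_self]
      rw [h0]
      simp
    haveI : Nontrivial (Ed d) := by
      have hf : 0 < Module.finrank ℝ (Ed d) := by
        rw [finrank_euclideanSpace_fin]; omega
      exact Module.nontrivial_of_finrank_pos hf
    have hvol : (volume : Measure (Ed d)) Set.univ = ⊤ :=
      MeasureTheory.measure_univ_of_isAddLeftInvariant volume
    have hconst : (∫⁻ _ : Ed d, ENNReal.ofReal K) = ⊤ := by
      rw [MeasureTheory.lintegral_const, hvol, ENNReal.mul_top]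
      exact (ENNReal.ofReal_pos.mpr hKpos).ne'
    exact top_le_iff.mp (hconst ▸ MeasureTheory.lintegral_mono hsup)
end
end
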